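/- arXiv:1705.10890 — 9 statements merged into one kernel-verified Lean document; each statement's English description precedes it below -/
import Mathlib

section
/- For every nonnegative integer n, every nonzero integer k, and every integer x, k divides lcm(n)·C(x+k, n) − lcm(n)·C(x, n). -/
/-!
By Chu–Vandermonde, `C(x + k, n) - C(x, n) = ∑_{1 ≤ j ≤ n} C(k, j) C(x, n - j)`, and each
`lcm(n) C(k, j)` with `1 ≤ j ≤ n` is a multiple of `k`, because `j ∣ lcm(n)` and
`j C(k, j) = k C(k - 1, j - 1)`.
-/

/-- `lcm(n) := lcm{1,...,n}`, with `lcm(0) = 1`. -/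
def lcmUpTo (n : ℕ) : ℕ := (Finset.Icc 1 n).lcm id

theorem dvd_lcmUpTo {n j : ℕ} (hj : j ∈ Finset.Icc 1 n) : j ∣ lcmUpTo n :=
  Finset.dvd_lcm hj

namespace Ring

variable {R : Type*} [CommRing R] [BinomialRing R]

theorem succ_mul_choose_succ (r : R) (j : ℕ) :
    ((j + 1 : ℕ) : R) * choose r (j + 1) = r * choose (r - 1) j := by
  have h := choose_smul_choose r (n := j + 1) (k := 1) (by omega)
  rwa [Nat.choose_one_right, choose_one_right, nsmul_eq_mul, Nat.cast_one,
    Nat.add_sub_cancel] at h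

theorem dvd_mul_choose_succ (r : R) {m : R} {j : ℕ} (hm : ((j + 1 : ℕ) : R) ∣ m) :
    r ∣ m * choose r (j + 1) := by
  obtain ⟨c, rfl⟩ := hm
  rw [mul_right_comm, succ_mul_choose_succ, mul_assoc]
  exact dvd_mul_right r _

theorem choose_add_eq_choose_add_sum (r s : R) (n : ℕ) :
    choose (r + s) n =
      choose r n + ∑ j ∈ Finset.range n, choose s (j + 1) * choose r (n - (j + 1)) := by
  rw [add_comm r, add_choose_eq n (Commute.all s r),
    Finset.Nat.sum_antidiagonal_eq_sum_range_succ (fun i j => choose s i * choose r j),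
    Finset.sum_range_succ', choose_zero_right, one_mul, Nat.sub_zero, add_comm]

theorem dvd_mul_choose_add_sub (r s m : R) (n : ℕ)
    (hm : ∀ j ∈ Finset.Icc 1 n, (j : R) ∣ m) :
    s ∣ m * choose (r + s) n - m * choose r n := by
  rw [choose_add_eq_choose_add_sum, mul_add, add_sub_cancel_left, Finset.mul_sum]
  refine Finset.dvd_sum fun j hj => ?_
  have hj1 : j + 1 ∈ Finset.Icc 1 n := Finset.mem_Icc.mpr ⟨by omega, Finset.mem_range.mp hj⟩
  rw [← mul_assoc]
  exact dvd_mul_of_dvd_left (dvd_mul_choose_succ s (hm _ hj1)) _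

end Ring

theorem dvd_lcm_mul_choose_sub_general (n : ℕ) (k x : ℤ) :
    k ∣ (lcmUpTo n : ℤ) * Ring.choose (x + k) n - (lcmUpTo n : ℤ) * Ring.choose x n :=
  Ring.dvd_mul_choose_add_sub x k _ n fun _ hj => Int.natCast_dvd_natCast.mpr (dvd_lcmUpTo hj)

/-- For every `n : ℕ`, nonzero integer `k` and integer `x`,
`k` divides `lcm(n)·C(x+k, n) − lcm(n)·C(x, n)`. -/
theorem dvd_lcm_mul_choose_sub (n : ℕ) (k x : ℤ) (hk : k ≠ 0) :
    k ∣ (lcmUpTo n : ℤ) * Ring.choose (x + k) n - (lcmUpTo n : ℤ) * Ring.choose x n :=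
  dvd_lcm_mul_choose_sub_general n k x
end

section
/- For every nonnegative integer n, the function f_n : ℤ → ℤ given by f_n(x) = lcm(n)·C(x, n) preserves all congruences of (ℤ, +): for every nonnegative integer r and integers x, y, if x ≡ y (mod r) then f_n(x) ≡ f_n(y) (mod r). -/
open Finset

theorem Ring.dvd_nsmul_choose {R : Type*} [Ring R] [BinomialRing R] (a : R) {k : ℕ}
    (hk : 1 ≤ k) : a ∣ k • Ring.choose a k := by
  have h := Ring.choose_smul_choose a hk
  rw [Nat.choose_one_right, Nat.cast_one, Ring.choose_one_right] at h
  exact h ▸ dvd_mul_right a _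

theorem dvd_lcmUpTo_s3 {n k : ℕ} (hk : 1 ≤ k) (hkn : k ≤ n) : k ∣ lcmUpTo n :=
  Finset.dvd_lcm (s := Icc 1 n) (f := id) (mem_Icc.mpr ⟨hk, hkn⟩)

theorem dvd_lcmUpTo_mul_choose (a : ℤ) {n k : ℕ} (hk : 1 ≤ k) (hkn : k ≤ n) :
    a ∣ (lcmUpTo n : ℤ) * Ring.choose a k := by
  refine (Ring.dvd_nsmul_choose a hk).trans ?_
  rw [nsmul_eq_mul]
  exact mul_dvd_mul_right (Int.natCast_dvd_natCast.mpr (dvd_lcmUpTo_s3 hk hkn)) _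

theorem dvd_lcmUpTo_mul_choose_add_sub (x a : ℤ) (n : ℕ) :
    a ∣ (lcmUpTo n : ℤ) * Ring.choose (x + a) n - (lcmUpTo n : ℤ) * Ring.choose x n := by
  rw [Ring.add_choose_eq n (Commute.all x a), Nat.sum_antidiagonal_eq_sum_range_succ
    (fun i j => Ring.choose x i * Ring.choose a j), sum_range_succ, Nat.sub_self,
    Ring.choose_zero_right, mul_one, mul_add, add_sub_cancel_right, mul_sum]
  refine dvd_sum fun i hi => ?_
  rw [mul_left_comm]
  exact (dvd_lcmUpTo_mul_choose a (Nat.sub_pos_of_lt (mem_range.mp hi)) (Nat.sub_le n i)).mul_left _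

/-- The function `f_n(x) = lcm(n)·C(x, n)` preserves all congruences of `(ℤ, +)`. -/
theorem lcm_mul_choose_preserves_congruences (n : ℕ) (r : ℕ) (x y : ℤ)
    (h : (r : ℤ) ∣ x - y) :
    (r : ℤ) ∣ (lcmUpTo n : ℤ) * Ring.choose x n - (lcmUpTo n : ℤ) * Ring.choose y n := by
  have key := dvd_lcmUpTo_mul_choose_add_sub y (x - y) n
  rw [add_sub_cancel] at key
  exact h.trans key
end

section
/- Let λ be an integer and n a positive integer, and let f(x) := λ·C(x, n). If f preserves the congruences mod i for every i = 1, ..., n (i.e., x ≡ y (mod i) implies f(x) ≡ f(y) (mod i)), then λ is a multiple of lcm(n) = lcm{1, ..., n}. -/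
lemma lcmUpTo_dvd_of_forall_dvd {a : ℤ} {n : ℕ}
    (h : ∀ i ∈ Finset.Icc 1 n, (i : ℤ) ∣ a) : (lcmUpTo n : ℤ) ∣ a :=
  Int.natCast_dvd.mpr <| Finset.lcm_dvd fun i hi => Int.natCast_dvd.mp (h i hi)

lemma mul_choose_self_sub_mul_choose_sub {R : Type*} [CommRing R] [BinomialRing R] (a : R)
    {n i : ℕ} (hi : 0 < i) (hin : i ≤ n) :
    a * Ring.choose (n : R) n - a * Ring.choose ((n : R) - i) n = a := by
  rw [← Nat.cast_sub hin, Ring.choose_natCast, Ring.choose_natCast, Nat.choose_self,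
    Nat.choose_eq_zero_of_lt (by omega)]
  simp only [Nat.cast_one, Nat.cast_zero, mul_one, mul_zero, sub_zero]

theorem lcm_dvd_of_preserves_congruences_general (lam : ℤ) (n : ℕ)
    (h : ∀ i ∈ Finset.Icc 1 n, ∀ x y : ℤ,
      (i : ℤ) ∣ x - y → (i : ℤ) ∣ lam * Ring.choose x n - lam * Ring.choose y n) :
    (lcmUpTo n : ℤ) ∣ lam := by
  refine lcmUpTo_dvd_of_forall_dvd fun i hi => ?_
  obtain ⟨hi_pos, hin⟩ := Finset.mem_Icc.mp hi
  have hcongr : (i : ℤ) ∣ (n : ℤ) - ((n : ℤ) - i) := by simp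
  simpa only [mul_choose_self_sub_mul_choose_sub lam hi_pos hin] using h i hi _ _ hcongr

/-- If `f(x) := λ·C(x, n)` preserves the congruences mod `i` for all `i = 1,...,n`,
then `λ` is a multiple of `lcm{1,...,n}`. -/
theorem lcm_dvd_of_preserves_congruences (lam : ℤ) (n : ℕ) (hn : 0 < n)
    (h : ∀ i ∈ Finset.Icc 1 n, ∀ x y : ℤ,
      (i : ℤ) ∣ x - y → (i : ℤ) ∣ lam * Ring.choose x n - lam * Ring.choose y n) :
    (lcmUpTo n : ℤ) ∣ lam :=
  lcm_dvd_of_preserves_congruences_general lam n h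
end

section
/- Let P(X) = Σ_{k=0}^{n} λ_k·C(X, k) with integer coefficients λ_k. If for all j, j' ∈ {0, 1, ..., n}, (j − j') divides P(j) − P(j'), then for each k, λ_k is a multiple of lcm(k) = lcm{1, ..., k}. -/
/-!
The coefficients `λ_k` of `P` in the binomial basis are its iterated forward differences at `0`:
`λ_k = Δ^k P(0)`. For `1 ≤ m ≤ k` write `Δ^k = Δ^(k-m) ∘ Δ^m`. Since `Δ^m` kills constants,
`Δ^m P(i) = Σ_t (-1)^(m-t) C(m,t) (P(i+t) - P(i))`, and each term is divisible by `m` because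
`t ∣ P(i+t) - P(i)` and `m ∣ C(m,t) t`. Being integer combinations of values, further differences
keep the factor `m`, so every `m ≤ k` divides `λ_k`.
-/

open Finset fwdDiff

lemma Nat.dvd_choose_mul_self (m t : ℕ) : m ∣ m.choose t * t := by
  rcases t with _ | s
  · exact dvd_zero m
  rcases m with _ | q
  · simp
  exact ⟨q.choose s, (Nat.add_one_mul_choose_eq q s).symm⟩

lemma fwdDiff_iter_sub_const {M G : Type*} [AddCommMonoid M] [AddCommGroup G] (h : M)
    (f : M → G) (c : G) {m : ℕ} (hm : m ≠ 0) :
    (Δ_[h])^[m] (fun x ↦ f x - c) = (Δ_[h])^[m] f := by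
  obtain ⟨m, rfl⟩ := Nat.exists_eq_succ_of_ne_zero hm
  rw [Function.iterate_succ_apply, Function.iterate_succ_apply]
  congr 1
  ext x
  simp only [fwdDiff, sub_sub_sub_cancel_right]

section fwdDiff

variable {R : Type*} [CommRing R] {f : ℕ → R} {N : ℕ}

lemma dvd_fwdDiff_iter_of_forall_dvd {d : R} (hf : ∀ i ≤ N, d ∣ f i) {j y : ℕ}
    (hjy : y + j ≤ N) : d ∣ (Δ_[1])^[j] f y := by
  rw [fwdDiff_iter_eq_sum_shift]
  refine dvd_sum fun t ht => ?_
  rw [zsmul_eq_mul]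
  exact dvd_mul_of_dvd_right (hf _ (by rw [mem_range] at ht; rw [smul_eq_mul, mul_one]; omega)) _

lemma natCast_dvd_fwdDiff_iter_self
    (hf : ∀ i t, i + t ≤ N → (t : R) ∣ f (i + t) - f i) {m i : ℕ} (hm : m ≠ 0)
    (him : i + m ≤ N) : (m : R) ∣ (Δ_[1])^[m] f i := by
  rw [← fwdDiff_iter_sub_const 1 f (f i) hm, fwdDiff_iter_eq_sum_shift]
  refine dvd_sum fun t ht => ?_
  obtain ⟨e, he⟩ := hf i t (by rw [mem_range] at ht; omega)
  obtain ⟨c, hc⟩ := Nat.dvd_choose_mul_self m t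
  have hc' : (m.choose t : R) * t = m * c := by rw [← Nat.cast_mul, hc, Nat.cast_mul]
  refine ⟨(-1) ^ (m - t) * c * e, ?_⟩
  rw [zsmul_eq_mul, smul_eq_mul, mul_one, he]
  push_cast
  linear_combination ((-1) ^ (m - t) * e) * hc'

lemma natCast_dvd_fwdDiff_iter_zero
    (hf : ∀ i t, i + t ≤ N → (t : R) ∣ f (i + t) - f i) {m k : ℕ} (hm : m ≠ 0)
    (hmk : m ≤ k) (hk : k ≤ N) : (m : R) ∣ (Δ_[1])^[k] f 0 := by
  rw [← Nat.sub_add_cancel hmk, Function.iterate_add_apply]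
  exact dvd_fwdDiff_iter_of_forall_dvd (N := N - m)
    (fun i hi => natCast_dvd_fwdDiff_iter_self hf hm (by omega)) (by omega)

end fwdDiff

lemma fwdDiff_iter_smul_const {G : Type*} [AddCommGroup G] (g : ℕ → ℤ) (c : G) (k : ℕ) :
    (Δ_[1])^[k] (fun x ↦ g x • c) = fun x ↦ (Δ_[1])^[k] g x • c := by
  induction k generalizing g with
  | zero => rfl
  | succ k ih =>
    rw [Function.iterate_succ_apply, Function.iterate_succ_apply, fwdDiff_smul_const]
    exact ih _

lemma fwdDiff_iter_sum_choose_smul_zero {G : Type*} [AddCommGroup G] (s : Finset ℕ) (a : ℕ → G)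
    (k : ℕ) :
    (Δ_[1])^[k] (fun x : ℕ ↦ ∑ r ∈ s, (x.choose r : ℤ) • a r) 0 = if k ∈ s then a k else 0 := by
  rw [← Finset.sum_fn]
  simp only [fwdDiff_iter_finsetSum, Finset.sum_apply, fwdDiff_iter_smul_const,
    fwdDiff_iter_choose_zero, ite_smul, one_smul, zero_smul, sum_ite_eq]

/-- If `P = Σ λ_k·C(X,k)` satisfies `(j − j') ∣ P(j) − P(j')` for all `j, j' ∈ {0,...,n}`,
then each `λ_k` is a multiple of `lcm{1,...,k}`. -/
theorem coeffs_multiple_of_lcm (n : ℕ) (lam : ℕ → ℤ)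
    (h : ∀ j j' : ℕ, j ≤ n → j' ≤ n →
      ((j : ℤ) - (j' : ℤ)) ∣
        (∑ k ∈ Finset.range (n + 1), lam k * Ring.choose (j : ℤ) k) -
          (∑ k ∈ Finset.range (n + 1), lam k * Ring.choose (j' : ℤ) k)) :
    ∀ k ≤ n, (lcmUpTo k : ℤ) ∣ lam k := by
  intro k hk
  set P : ℕ → ℤ := fun j ↦ ∑ r ∈ range (n + 1), (j.choose r : ℤ) • lam r
  have hP : ∀ i t, i + t ≤ n → (t : ℤ) ∣ P (i + t) - P i := fun i t hit => by
    have := h (i + t) i hit (by omega)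
    simp only [Ring.choose_natCast] at this
    rw [Nat.cast_add, add_sub_cancel_left] at this
    simpa only [P, smul_eq_mul, mul_comm] using this
  have hcoeff : (Δ_[1])^[k] P 0 = lam k := by
    rw [fwdDiff_iter_sum_choose_smul_zero, if_pos (mem_range_succ_iff.mpr hk)]
  rw [Int.natCast_dvd]
  refine Finset.lcm_dvd fun m hm => Int.natCast_dvd.mp ?_
  rw [Finset.mem_Icc] at hm
  rw [← hcoeff]
  exact natCast_dvd_fwdDiff_iter_zero hP (Nat.one_le_iff_ne_zero.mp hm.1) hm.2 hk
end

section
/- The polynomial function g(x) := x²(x−1)²/2 maps ℤ to ℤ and preserves all congruences of (ℤ, +). -/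
/-!
With `t = x(x − 1)/2`, an integer, we have `g(x) = 2t²`. Hence
`g(x) − g(y) = (2t(x) − 2t(y))(t(x) + t(y))`, and `2t(x) − 2t(y) = (x − y)(x + y − 1)`
is divisible by `x − y`.
-/

theorem dvd_two_mul_sq_sub_of_dvd_two_mul_sub {R : Type*} [CommRing R] {a u v : R}
    (h : a ∣ 2 * u - 2 * v) : a ∣ 2 * u ^ 2 - 2 * v ^ 2 :=
  (h.mul_right (u + v)).trans (dvd_of_eq (by ring))

namespace Int

theorem two_dvd_mul_sub_one (x : ℤ) : 2 ∣ x * (x - 1) :=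
  (even_mul_pred_self x).two_dvd

theorem sq_mul_sub_one_sq_div_two (x : ℤ) :
    x ^ 2 * (x - 1) ^ 2 / 2 = 2 * (x * (x - 1) / 2) ^ 2 := by
  obtain ⟨t, ht⟩ := two_dvd_mul_sub_one x
  rw [show x ^ 2 * (x - 1) ^ 2 = 2 * (2 * t ^ 2) by linear_combination (x * (x - 1) + 2 * t) * ht,
    ht, Int.mul_ediv_cancel_left _ two_ne_zero, Int.mul_ediv_cancel_left _ two_ne_zero]

theorem sub_dvd_mul_sub_one_sub (x y : ℤ) : x - y ∣ x * (x - 1) - y * (y - 1) :=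
  Dvd.intro (x + y - 1) (by ring)

end Int

/-- The function `g(x) = x²(x−1)²/2` is integer valued and preserves all
congruences of `(ℤ, +)`. -/
theorem sq_mul_sq_div_two_preserves_congruences :
    (∀ x : ℤ, (2 : ℤ) ∣ x ^ 2 * (x - 1) ^ 2) ∧
      ∀ r : ℕ, ∀ x y : ℤ, (r : ℤ) ∣ x - y →
        (r : ℤ) ∣ x ^ 2 * (x - 1) ^ 2 / 2 - y ^ 2 * (y - 1) ^ 2 / 2 := by
  refine ⟨fun x => ?_, fun r x y hr => ?_⟩
  · rw [← mul_pow]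
    exact (Int.two_dvd_mul_sub_one x).pow two_ne_zero
  · rw [Int.sq_mul_sub_one_sq_div_two, Int.sq_mul_sub_one_sq_div_two]
    refine hr.trans (dvd_two_mul_sq_sub_of_dvd_two_mul_sub ?_)
    rw [Int.mul_ediv_cancel' (Int.two_dvd_mul_sub_one x),
      Int.mul_ediv_cancel' (Int.two_dvd_mul_sub_one y)]
    exact Int.sub_dvd_mul_sub_one_sub x y
end

section
/- Every function f : A → ℤ defined on a finite set A ⊆ ℤ that preserves all congruences (i.e., (a − b) divides (f(a) − f(b)) for all a, b ∈ A) extends, for any given z ∈ ℤ \ A, to a function on A ∪ {z} with the same property. -/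
/-!
The new value `x = g z` must satisfy `x ≡ f a [ZMOD z - a]` for every `a ∈ A`. By the generalized
Chinese remainder theorem such a system is solvable as soon as any two congruences agree modulo the
gcd of their moduli, and `gcd (z - a) (z - b)` divides `(z - b) - (z - a) = a - b`, which divides
`f a - f b`. The Chinese remainder theorem for non-coprime moduli is proved by induction on the
system; the inductive step rests on the distributivity `gcd (lcm u v) n ∣ lcm (gcd u n) (gcd v n)`,
checked on `p`-adic valuations.
-/

theorem Nat.gcd_lcm_dvd_lcm_gcd (u v n : ℕ) :
    gcd (lcm u v) n ∣ lcm (gcd u n) (gcd v n) := by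
  rcases eq_or_ne u 0 with rfl | hu
  · simp [dvd_lcm_left]
  rcases eq_or_ne v 0 with rfl | hv
  · simp [dvd_lcm_right]
  rcases eq_or_ne n 0 with rfl | hn
  · simp
  rw [← factorization_le_iff_dvd (gcd_ne_zero_right hn)
      (lcm_ne_zero (gcd_ne_zero_right hn) (gcd_ne_zero_right hn)),
    factorization_gcd (lcm_ne_zero hu hv) hn, factorization_lcm hu hv,
    factorization_lcm (gcd_ne_zero_right hn) (gcd_ne_zero_right hn),
    factorization_gcd hu hn, factorization_gcd hv hn]
  intro p
  simp only [Finsupp.inf_apply, Finsupp.sup_apply]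
  omega

theorem Int.gcd_lcm_dvd_lcm_gcd (u v n : ℤ) :
    GCDMonoid.gcd (GCDMonoid.lcm u v) n ∣
      GCDMonoid.lcm (GCDMonoid.gcd u n) (GCDMonoid.gcd v n) := by
  simp only [← Int.coe_gcd, ← Int.coe_lcm, Int.natCast_dvd_natCast, Int.gcd, Int.lcm,
    Int.natAbs_natCast]
  exact Nat.gcd_lcm_dvd_lcm_gcd _ _ _

theorem Finset.gcd_lcm_dvd_lcm_gcd {ι : Type*} (s : Finset ι) (f : ι → ℤ) (n : ℤ) :
    GCDMonoid.gcd (s.lcm f) n ∣ s.lcm fun i => GCDMonoid.gcd (f i) n := by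
  classical
  induction s using Finset.induction_on with
  | empty => simp
  | insert c s _ ih =>
    rw [lcm_insert, lcm_insert]
    exact (Int.gcd_lcm_dvd_lcm_gcd _ _ _).trans (lcm_dvd_lcm dvd_rfl ih)

theorem Int.exists_dvd_sub_and_dvd_sub_of_gcd_dvd {m n a b : ℤ}
    (h : GCDMonoid.gcd m n ∣ a - b) : ∃ x, m ∣ x - a ∧ n ∣ x - b := by
  obtain ⟨k, hk⟩ := h
  rw [← Int.coe_gcd, Int.gcd_eq_gcd_ab] at hk
  exact ⟨a - m * m.gcdA n * k, ⟨-(m.gcdA n * k), by ring⟩,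
    ⟨m.gcdB n * k, by linear_combination hk⟩⟩

theorem Int.exists_forall_dvd_sub_of_gcd_dvd {ι : Type*} (s : Finset ι) (n F : ι → ℤ)
    (h : ∀ i ∈ s, ∀ j ∈ s, GCDMonoid.gcd (n i) (n j) ∣ F i - F j) :
    ∃ x, ∀ i ∈ s, n i ∣ x - F i := by
  classical
  induction s using Finset.induction_on with
  | empty => exact ⟨0, by simp⟩
  | insert c s _ ih =>
    simp only [Finset.forall_mem_insert] at h ⊢
    obtain ⟨x, hx⟩ := ih fun i hi j hj => (h.2 i hi).2 j hj
    have hcompat : GCDMonoid.gcd (s.lcm n) (n c) ∣ x - F c := by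
      refine (s.gcd_lcm_dvd_lcm_gcd n (n c)).trans (Finset.lcm_dvd fun i hi => ?_)
      rw [← sub_add_sub_cancel x (F i)]
      exact dvd_add ((GCDMonoid.gcd_dvd_left _ _).trans (hx i hi)) (h.2 i hi).1
    obtain ⟨y, hyx, hyc⟩ := exists_dvd_sub_and_dvd_sub_of_gcd_dvd hcompat
    refine ⟨y, hyc, fun i hi => ?_⟩
    rw [← sub_add_sub_cancel y x]
    exact dvd_add ((Finset.dvd_lcm hi).trans hyx) (hx i hi)

theorem Finset.forall_mem_insert_dvd_sub {R : Type*} [CommRing R] [DecidableEq R]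
    {A : Finset R} {g : R → R} {z : R} (hA : ∀ a ∈ A, ∀ b ∈ A, a - b ∣ g a - g b)
    (hz : ∀ a ∈ A, z - a ∣ g z - g a) :
    ∀ a ∈ insert z A, ∀ b ∈ insert z A, a - b ∣ g a - g b := by
  simp only [forall_mem_insert, sub_self, dvd_refl, true_and]
  refine ⟨hz, fun a ha => ⟨?_, hA a ha⟩⟩
  rw [← neg_sub z a, neg_dvd, dvd_sub_comm]
  exact hz a ha

/-- A congruence preserving map on a finite subset `A` of `ℤ` extends to any
additional point `z ∉ A`, keeping the congruence preservation. -/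
theorem extend_one_point (A : Finset ℤ) (f : ℤ → ℤ) (z : ℤ) (hz : z ∉ A)
    (h : ∀ a ∈ A, ∀ b ∈ A, (a - b) ∣ f a - f b) :
    ∃ g : ℤ → ℤ, (∀ a ∈ A, g a = f a) ∧
      ∀ a ∈ insert z A, ∀ b ∈ insert z A, (a - b) ∣ g a - g b := by
  obtain ⟨x, hx⟩ := Int.exists_forall_dvd_sub_of_gcd_dvd A (z - ·) f fun a ha b hb => by
    have hgcd : GCDMonoid.gcd (z - a) (z - b) ∣ a - b := by
      rw [← sub_sub_sub_cancel_left b a z]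
      exact dvd_sub (gcd_dvd_right _ _) (gcd_dvd_left _ _)
    exact hgcd.trans (h a ha b hb)
  have hne : ∀ a ∈ A, a ≠ z := fun a ha haz => hz (haz ▸ ha)
  have hfix : ∀ a ∈ A, Function.update f z x a = f a := fun a ha =>
    Function.update_of_ne (hne a ha) _ _
  refine ⟨Function.update f z x, hfix, Finset.forall_mem_insert_dvd_sub ?_ ?_⟩
  · intro a ha b hb
    rw [hfix a ha, hfix b hb]
    exact h a ha b hb
  · intro a ha
    rw [hfix a ha, Function.update_self]
    exact hx a ha
end

section
/- Every function f : A → ℤ on a finite set A ⊆ ℤ satisfying (a − b) | (f(a) − f(b)) for all a, b ∈ A extends to a total function F : ℤ → ℤ satisfying (x − y) | (F(x) − F(y)) for all x, y ∈ ℤ. -/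
/-!
For a finite set `S` and a point `x`, the congruences `v ≡ g c [ZMOD x - c]`, `c ∈ S`, are pairwise
compatible: `gcd (x - c) (x - c')` divides `c - c'`, which divides `g c - g c'`. Since the
divisibility lattice of `ℤ` is distributive, the Chinese remainder theorem for compatible
congruences gives a common solution `v`, and setting `g x := v` extends `g` to `insert x S`.
Doing this along an enumeration of `ℤ` gives a coherent sequence of finite extensions, whose
union is the total map. Finiteness is essential, as the remainder theorem fails for infinitely
many moduli.
-/

open Function Set

theorem Nat.gcd_lcm_dvd_lcm_gcd_s15 (x y z : ℕ) : gcd x (lcm y z) ∣ lcm (gcd x y) (gcd x z) := by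
  rcases eq_or_ne x 0 with rfl | hx
  · simp
  rcases eq_or_ne y 0 with rfl | hy
  · simpa using Nat.dvd_lcm_left x (gcd x z)
  rcases eq_or_ne z 0 with rfl | hz
  · simpa using Nat.dvd_lcm_right (gcd x y) x
  have hxy : gcd x y ≠ 0 := Nat.gcd_ne_zero_left hx
  have hxz : gcd x z ≠ 0 := Nat.gcd_ne_zero_left hx
  rw [← Nat.factorization_le_iff_dvd (Nat.gcd_ne_zero_left hx) (Nat.lcm_ne_zero hxy hxz),
    Nat.factorization_gcd hx (Nat.lcm_ne_zero hy hz), Nat.factorization_lcm hy hz,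
    Nat.factorization_lcm hxy hxz, Nat.factorization_gcd hx hy, Nat.factorization_gcd hx hz]
  intro p
  simp only [Finsupp.inf_apply, Finsupp.sup_apply, inf_sup_left, le_refl]

theorem Int.gcd_lcm_dvd_lcm_gcd_s15 (x y z : ℤ) :
    GCDMonoid.gcd x (GCDMonoid.lcm y z) ∣
      GCDMonoid.lcm (GCDMonoid.gcd x y) (GCDMonoid.gcd x z) := by
  rw [← Int.natAbs_dvd_natAbs]
  simpa [Int.natAbs_gcd, Int.natAbs_lcm, Int.gcd, Int.lcm] using
    Nat.gcd_lcm_dvd_lcm_gcd_s15 x.natAbs y.natAbs z.natAbs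

theorem exists_dvd_sub_and_dvd_sub {R : Type*} [CommRing R] [IsDomain R] [IsBezout R]
    [GCDMonoid R] {m n a b : R} (h : gcd m n ∣ a - b) : ∃ v, m ∣ v - a ∧ n ∣ v - b := by
  obtain ⟨x, y, hxy⟩ := (gcd_dvd_iff_exists m n).mp h
  exact ⟨a - m * x, ⟨-x, by ring⟩, ⟨y, by linear_combination hxy⟩⟩

theorem Int.gcd_finset_lcm_dvd {ι : Type*} {x m : ℤ} {n : ι → ℤ} (s : Finset ι)
    (h : ∀ i ∈ s, GCDMonoid.gcd x (n i) ∣ m) : GCDMonoid.gcd x (s.lcm n) ∣ m := by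
  classical
  induction s using Finset.induction_on with
  | empty => simp
  | insert i s _ ih =>
    rw [Finset.lcm_insert]
    exact (Int.gcd_lcm_dvd_lcm_gcd_s15 _ _ _).trans <| _root_.lcm_dvd (h i (s.mem_insert_self i))
      (ih fun j hj => h j (Finset.mem_insert_of_mem hj))

theorem Int.exists_forall_dvd_sub {ι : Type*} (s : Finset ι) (n t : ι → ℤ)
    (h : ∀ i ∈ s, ∀ j ∈ s, GCDMonoid.gcd (n i) (n j) ∣ t i - t j) :
    ∃ v, ∀ i ∈ s, n i ∣ v - t i := by
  classical
  induction s using Finset.induction_on with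
  | empty => simp
  | insert i s _ ih =>
    obtain ⟨v, hv⟩ := ih fun j hj k hk =>
      h j (Finset.mem_insert_of_mem hj) k (Finset.mem_insert_of_mem hk)
    have compat : GCDMonoid.gcd (n i) (s.lcm n) ∣ t i - v := by
      refine Int.gcd_finset_lcm_dvd s fun j hj => ?_
      have hij := h i (s.mem_insert_self i) j (Finset.mem_insert_of_mem hj)
      have hvj := (gcd_dvd_right (n i) (n j)).trans (hv j hj)
      simpa using dvd_sub hij hvj
    obtain ⟨w, hwi, hws⟩ := exists_dvd_sub_and_dvd_sub compat
    refine ⟨w, (Finset.forall_mem_insert _ _ _).mpr ⟨hwi, fun j hj => ?_⟩⟩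
    simpa using dvd_add ((Finset.dvd_lcm hj).trans hws) (hv j hj)

def PreservesCongruencesOn {R : Type*} [CommRing R] (g : R → R) (S : Set R) : Prop :=
  ∀ a ∈ S, ∀ b ∈ S, a - b ∣ g a - g b

theorem PreservesCongruencesOn.exists_extension_insert {g : ℤ → ℤ} {S : Finset ℤ}
    (hg : PreservesCongruencesOn g S) (x : ℤ) :
    ∃ g' : ℤ → ℤ, EqOn g' g S ∧ PreservesCongruencesOn g' (insert x S) := by
  obtain ⟨v, hv⟩ : ∃ v, ∀ c ∈ S, x - c ∣ v - g c := by
    refine Int.exists_forall_dvd_sub S (x - ·) g fun c hc c' hc' => ?_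
    have : GCDMonoid.gcd (x - c) (x - c') ∣ c - c' := by
      simpa using dvd_sub (gcd_dvd_right (x - c) (x - c')) (gcd_dvd_left (x - c) (x - c'))
    exact this.trans (hg c hc c' hc')
  have hagree : EqOn (update g x v) g S := by
    intro c hc
    rcases eq_or_ne c x with rfl | hne
    · simpa [sub_eq_zero] using hv c hc
    · exact update_of_ne hne v g
  refine ⟨update g x v, hagree, ?_⟩
  have hx : ∀ c ∈ S, x - c ∣ update g x v x - update g x v c := fun c hc => by
    simpa [hagree hc] using hv c hc
  rintro a (rfl | ha) b (rfl | hb)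
  · simp
  · exact hx b hb
  · simpa using (hx a ha).neg_left.neg_right
  · rw [hagree ha, hagree hb]
    exact hg a ha b hb

structure PartialCongrMap where
  dom : Finset ℤ
  toFun : ℤ → ℤ
  preserves : PreservesCongruencesOn toFun dom

namespace PartialCongrMap

noncomputable def extend (p : PartialCongrMap) (x : ℤ) : PartialCongrMap where
  dom := insert x p.dom
  toFun := (p.preserves.exists_extension_insert x).choose
  preserves := by
    simpa using (p.preserves.exists_extension_insert x).choose_spec.2

theorem extend_eqOn (p : PartialCongrMap) (x : ℤ) : EqOn (p.extend x).toFun p.toFun p.dom :=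
  (p.preserves.exists_extension_insert x).choose_spec.1

noncomputable def seq (p : PartialCongrMap) : ℕ → PartialCongrMap
  | 0 => p
  | n + 1 => (p.seq n).extend (Equiv.intEquivNat.symm n)

theorem mem_dom_seq (p : PartialCongrMap) (x : ℤ) :
    x ∈ (p.seq (Equiv.intEquivNat x + 1)).dom := by
  simp [seq, extend]

theorem seq_mono (p : PartialCongrMap) {m n : ℕ} (hmn : m ≤ n) :
    (p.seq m).dom ⊆ (p.seq n).dom ∧ EqOn (p.seq n).toFun (p.seq m).toFun (p.seq m).dom := by
  induction n, hmn using Nat.le_induction with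
  | base => exact ⟨subset_rfl, fun _ _ => rfl⟩
  | succ n _ ih =>
    refine ⟨ih.1.trans (Finset.subset_insert _ _), fun x hx => ?_⟩
    exact ((p.seq n).extend_eqOn _ (ih.1 hx)).trans (ih.2 hx)

noncomputable def limit (p : PartialCongrMap) (x : ℤ) : ℤ :=
  (p.seq (Equiv.intEquivNat x + 1)).toFun x

theorem limit_eq (p : PartialCongrMap) {n : ℕ} {x : ℤ} (hx : x ∈ (p.seq n).dom) :
    p.limit x = (p.seq n).toFun x := by
  rw [limit, ← (p.seq_mono (le_max_left _ n)).2 (p.mem_dom_seq x),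
    (p.seq_mono (le_max_right (Equiv.intEquivNat x + 1) n)).2 hx]

theorem limit_eqOn (p : PartialCongrMap) : EqOn p.limit p.toFun p.dom :=
  fun _ hx => p.limit_eq (n := 0) hx

theorem preservesCongruencesOn_limit (p : PartialCongrMap) :
    PreservesCongruencesOn p.limit univ := by
  intro x _ y _
  set N := max (Equiv.intEquivNat x + 1) (Equiv.intEquivNat y + 1)
  have hx := (p.seq_mono (le_max_left _ _ : _ ≤ N)).1 (p.mem_dom_seq x)
  have hy := (p.seq_mono (le_max_right _ _ : _ ≤ N)).1 (p.mem_dom_seq y)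
  rw [p.limit_eq hx, p.limit_eq hy]
  exact (p.seq N).preserves x hx y hy

end PartialCongrMap

/-- A congruence preserving map on a finite subset of `ℤ` extends to a total
congruence preserving map on `ℤ`. -/
theorem extend_to_total (A : Finset ℤ) (f : ℤ → ℤ)
    (h : ∀ a ∈ A, ∀ b ∈ A, (a - b) ∣ f a - f b) :
    ∃ F : ℤ → ℤ, (∀ a ∈ A, F a = f a) ∧ ∀ x y : ℤ, (x - y) ∣ F x - F y := by
  let p : PartialCongrMap := ⟨A, f, h⟩
  exact ⟨p.limit, p.limit_eqOn, fun x y => p.preservesCongruencesOn_limit x trivial y trivial⟩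
end

section
/- Let V be a join-semilattice with least element 0 in which the residual x \\ y (least z with x ≤ y ∨ z) exists for all x, y. Then d_V(x,y) := (x \\ y) ∨ (y \\ x) is an ultrametric distance on V satisfying d_V(0,x) = x, and it is the least such distance: any ultrametric distance d on V with d(0,x) = x for all x satisfies d_V(x,y) ≤ d(x,y). -/
/-! The residual `res x y` behaves like `x \ y` in a generalized co-Heyting algebra, except that
no meets are available; everything follows from the adjunction `res x y ≤ z ↔ x ≤ y ⊔ z`.
Minimality of `d_V` comes from `x = d(0,x) ≤ d(0,y) ⊔ d(y,x) = y ⊔ d(y,x)`, i.e. `x \ y ≤ d(y,x)`. -/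

/-- An ultrametric distance on `V` with values in `V` (a join-semilattice with
least element `⊥`). -/
def IsLatticeUltrametric {V : Type*} [SemilatticeSup V] [OrderBot V] (d : V → V → V) : Prop :=
  (∀ x y, d x y = ⊥ ↔ x = y) ∧ (∀ x y, d x y = d y x) ∧
    (∀ x y z, d x y ≤ d x z ⊔ d z y)

def IsResidual {V : Type*} [SemilatticeSup V] (res : V → V → V) : Prop :=
  ∀ x y : V, IsLeast {z : V | x ≤ y ⊔ z} (res x y)

def residualDist {V : Type*} [SemilatticeSup V] (res : V → V → V) (x y : V) : V :=
  res x y ⊔ res y x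

namespace IsResidual

variable {V : Type*} [SemilatticeSup V] {res : V → V → V}

theorem le_sup_res (h : IsResidual res) (x y : V) : x ≤ y ⊔ res x y :=
  (h x y).1

theorem res_le_iff (h : IsResidual res) {x y z : V} : res x y ≤ z ↔ x ≤ y ⊔ z :=
  ⟨fun hz => (h.le_sup_res x y).trans (sup_le_sup_left hz y), fun hz => (h x y).2 hz⟩

theorem res_le_res_sup_res (h : IsResidual res) (x y z : V) : res x y ≤ res x z ⊔ res z y :=
  h.res_le_iff.2 <|
    calc x ≤ z ⊔ res x z := h.le_sup_res x z
      _ ≤ (y ⊔ res z y) ⊔ res x z := sup_le_sup_right (h.le_sup_res z y) _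
      _ = y ⊔ (res x z ⊔ res z y) := by ac_rfl

theorem residualDist_le_sup (h : IsResidual res) (x y z : V) :
    residualDist res x y ≤ residualDist res x z ⊔ residualDist res z y := by
  unfold residualDist
  apply sup_le
  · exact (h.res_le_res_sup_res x y z).trans (sup_le_sup le_sup_left le_sup_left)
  · rw [sup_comm (res x z ⊔ res z x)]
    exact (h.res_le_res_sup_res y x z).trans (sup_le_sup le_sup_right le_sup_right)

variable [OrderBot V]

theorem res_eq_bot_iff (h : IsResidual res) {x y : V} : res x y = ⊥ ↔ x ≤ y := by
  rw [← le_bot_iff, h.res_le_iff, sup_bot_eq]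

theorem residualDist_eq_bot_iff (h : IsResidual res) {x y : V} :
    residualDist res x y = ⊥ ↔ x = y := by
  rw [residualDist, sup_eq_bot_iff, h.res_eq_bot_iff, h.res_eq_bot_iff, le_antisymm_iff]

theorem isLatticeUltrametric_residualDist (h : IsResidual res) :
    IsLatticeUltrametric (residualDist res) :=
  ⟨fun _ _ => h.residualDist_eq_bot_iff, fun _ _ => sup_comm _ _, h.residualDist_le_sup⟩

theorem residualDist_bot_left (h : IsResidual res) (x : V) : residualDist res ⊥ x = x := by
  have h_bot_left : res ⊥ x = ⊥ := h.res_eq_bot_iff.2 bot_le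
  have h_bot_right : res x ⊥ = x :=
    le_antisymm (h.res_le_iff.2 (by rw [bot_sup_eq])) (by simpa only [bot_sup_eq] using h.le_sup_res x ⊥)
  rw [residualDist, h_bot_left, h_bot_right, bot_sup_eq]

theorem res_le_of_dist_bot_left (h : IsResidual res) {d : V → V → V}
    (hd_tri : ∀ x y z, d x y ≤ d x z ⊔ d z y) (hd_bot : ∀ x, d ⊥ x = x) (x y : V) :
    res x y ≤ d y x :=
  h.res_le_iff.2 <| by simpa only [hd_bot] using hd_tri ⊥ x y

theorem residualDist_le (h : IsResidual res) {d : V → V → V} (hd : IsLatticeUltrametric d)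
    (hd_bot : ∀ x, d ⊥ x = x) (x y : V) : residualDist res x y ≤ d x y := by
  obtain ⟨-, hd_symm, hd_tri⟩ := hd
  exact sup_le (hd_symm x y ▸ h.res_le_of_dist_bot_left hd_tri hd_bot x y)
    (h.res_le_of_dist_bot_left hd_tri hd_bot y x)

end IsResidual

/-- If residuals exist in `V`, then `d_V(x,y) := (x \ y) ∨ (y \ x)` is an
ultrametric distance with `d_V(0,x) = x`, and it is the least such distance. -/
theorem residual_dist_is_least_ultrametric (V : Type*) [SemilatticeSup V] [OrderBot V]
    (res : V → V → V) (hres : ∀ x y : V, IsLeast {z : V | x ≤ y ⊔ z} (res x y)) :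
    IsLatticeUltrametric (fun x y : V => res x y ⊔ res y x) ∧
      (∀ x : V, res ⊥ x ⊔ res x ⊥ = x) ∧
      ∀ d : V → V → V, IsLatticeUltrametric d → (∀ x : V, d ⊥ x = x) →
        ∀ x y : V, res x y ⊔ res y x ≤ d x y := by
  have h : IsResidual res := hres
  exact ⟨h.isLatticeUltrametric_residualDist, h.residualDist_bot_left,
    fun _ hd hd_bot => h.residualDist_le hd hd_bot⟩
end

section
/- In an algebraic lattice V in which residuals exist, the residual x \\ y of two compact elements x, y is compact. -/
/-!
Write `r = x \ y`. Since `V` is algebraic, `r` is the join of the compact elements below it, so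
`x ≤ y ⊔ r` is a join of `y` and compacts below `r`. Compactness of `x` picks out finitely many of
them, whose join `c` is compact, lies below `r` and still satisfies `x ≤ y ⊔ c`; minimality of `r`
then forces `r = c`.
-/

namespace CompleteLattice

/-- The December 2024 Mathlib definition of a compact element of a complete lattice
(the Mathlib name is gone; `IsCompactElement` now uses directed sets). -/
def IsCompactElement {α : Type*} [CompleteLattice α] (k : α) :=
  ∀ s : Set α, k ≤ sSup s → ∃ t : Finset α, ↑t ⊆ s ∧ k ≤ t.sup id

variable {α : Type*} [CompleteLattice α]

theorem isCompactElement_iff_isCompactElement {k : α} :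
    IsCompactElement k ↔ _root_.IsCompactElement k :=
  (isCompactElement_iff_exists_le_sSup_of_le_sSup α k).symm

theorem IsCompactElement.exists_le_sup_of_le_sup [IsCompactlyGenerated α] {x y r : α}
    (hx : IsCompactElement x) (h : x ≤ y ⊔ r) :
    ∃ c, IsCompactElement c ∧ c ≤ r ∧ x ≤ y ⊔ c := by
  classical
  set C := {c : α | _root_.IsCompactElement c ∧ c ≤ r}
  have hxC : x ≤ sSup (insert y C) := by rwa [sSup_insert, sSup_compact_le_eq]
  obtain ⟨t, htC, hxt⟩ := hx _ hxC
  have hteC : ↑(t.erase y) ⊆ C := by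
    rw [Finset.coe_erase]
    exact Set.sdiff_singleton_subset_iff.2 htC
  refine ⟨(t.erase y).sup id,
    isCompactElement_iff_isCompactElement.2 <|
      isCompactElement_finsetSup _ fun c hc => (hteC hc).1,
    Finset.sup_le fun c hc => (hteC hc).2, ?_⟩
  calc x ≤ t.sup id := hxt
    _ ≤ (insert y (t.erase y)).sup id := Finset.sup_mono (Finset.insert_erase_subset y t)
    _ = y ⊔ (t.erase y).sup id := Finset.sup_insert

end CompleteLattice

theorem residual_of_compact_is_compact_general (V : Type*) [CompleteLattice V]
    [IsCompactlyGenerated V] (res : V → V → V)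
    (hres : ∀ x y : V, IsLeast {z : V | x ≤ y ⊔ z} (res x y))
    (x y : V) (hx : CompleteLattice.IsCompactElement x) :
    CompleteLattice.IsCompactElement (res x y) := by
  obtain ⟨c, hc, hcr, hxc⟩ := hx.exists_le_sup_of_le_sup (hres x y).1
  have hrc : res x y = c := le_antisymm ((hres x y).2 hxc) hcr
  exact hrc ▸ hc

/-- In an algebraic (compactly generated) complete lattice with residuals, the
residual of two compact elements is compact. -/
theorem residual_of_compact_is_compact (V : Type*) [CompleteLattice V]
    [IsCompactlyGenerated V] (res : V → V → V)
    (hres : ∀ x y : V, IsLeast {z : V | x ≤ y ⊔ z} (res x y))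
    (x y : V) (hx : CompleteLattice.IsCompactElement x)
    (hy : CompleteLattice.IsCompactElement y) :
    CompleteLattice.IsCompactElement (res x y) :=
  residual_of_compact_is_compact_general V res hres x y hx
end
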